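/- For a k-set S = {i₁ < i₂ < ⋯ < i_k} ⊆ {1,…,n}, let L_k(S) = |{T ∈ C([n],k) : T ⪰ S}| and, for j ≤ k, let L_j(S) = |{T ∈ C([n],j) : T ⪰ {i₁,…,i_j}}| (shift order on j-sets). Then L_k(S) = C(i_k, k) − C(i_k − i₁, k) − ∑_{ℓ=1}^{k−2} L_ℓ(S) · C(i_k − i_{ℓ+1}, k − ℓ). -/

import Mathlib

/-- Shift order: `shiftGE S T` means `S ⪰ T`, i.e. the ℓ-th smallest element of `S`
is at most the ℓ-th smallest element of `T`, for every ℓ. -/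
def shiftGE (S T : Finset ℕ) : Prop :=
  List.Forall₂ (· ≤ ·) (Finset.sort S (· ≤ ·)) (Finset.sort T (· ≤ ·))

/-- The `(t+1)`-st smallest element of `S` (0-indexed). -/
def nthSmall (S : Finset ℕ) (t : ℕ) : ℕ := (Finset.sort S (· ≤ ·)).getD t 0

/-- The number of `j`-subsets of `{1,…,n}` to the left of `S` in the shift order. -/
noncomputable def Lnum (n j : ℕ) (S : Finset ℕ) : ℕ :=
  Nat.card {T : Finset ℕ // T ⊆ Finset.Icc 1 n ∧ T.card = j ∧ shiftGE T S}

/-- The set of the `j` smallest elements of `S`. -/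
def firstEls (S : Finset ℕ) (j : ℕ) : Finset ℕ :=
  ((Finset.sort S (· ≤ ·)).take j).toFinset

/-!
Write `S = {i₁ < ⋯ < i_k}` and sort the `k`-subsets `T = {t₁ < ⋯ < t_k}` of `{1,…,i_k}` by the
length `ℓ` of the longest prefix on which `t_s ≤ i_s`. The fibre `ℓ = k` consists of the sets
`⪰ S`. For `ℓ < k` the first `ℓ` elements of `T` form an `ℓ`-set `⪰ {i₁,…,i_ℓ}`, hence lie below
`i_{ℓ+1}`, and the remaining `k - ℓ` elements form an arbitrary `(k-ℓ)`-subset of `(i_{ℓ+1}, i_k]`;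
so that fibre has `L_ℓ(S) · C(i_k - i_{ℓ+1}, k - ℓ)` elements. The fibre `ℓ = 0` has
`C(i_k - i₁, k)` elements, the fibre `ℓ = k - 1` is empty, and all fibres together have `C(i_k, k)`.
-/

open Finset

instance (S T : Finset ℕ) : Decidable (shiftGE S T) :=
  inferInstanceAs (Decidable (List.Forall₂ _ _ _))

section SortedElements

variable {S : Finset ℕ} {s t x : ℕ}

lemma nthSmall_eq_getElem (h : t < #S) :
    nthSmall S t = (S.sort (· ≤ ·))[t]'(by rwa [length_sort]) :=
  List.getD_eq_getElem _ _ _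

lemma nthSmall_mem (h : t < #S) : nthSmall S t ∈ S := by
  rw [nthSmall_eq_getElem h, ← mem_sort (· ≤ ·)]
  exact List.getElem_mem _

lemma nthSmall_lt_nthSmall (hst : s < t) (h : t < #S) : nthSmall S s < nthSmall S t := by
  rw [nthSmall_eq_getElem (hst.trans h), nthSmall_eq_getElem h]
  exact (sortedLT_sort S).strictMono_get (by simpa using hst)

lemma nthSmall_le_nthSmall (hst : s ≤ t) (h : t < #S) : nthSmall S s ≤ nthSmall S t := by
  rcases hst.lt_or_eq with hst | rfl
  exacts [(nthSmall_lt_nthSmall hst h).le, le_rfl]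

lemma exists_nthSmall_eq_of_mem (hx : x ∈ S) : ∃ r < #S, nthSmall S r = x := by
  obtain ⟨r, hr, hxr⟩ := List.getElem_of_mem ((mem_sort (· ≤ ·)).2 hx)
  rw [length_sort] at hr
  exact ⟨r, hr, by rw [nthSmall_eq_getElem hr, hxr]⟩

lemma nthSmall_zero_le_of_mem (hx : x ∈ S) : nthSmall S 0 ≤ x := by
  obtain ⟨r, hr, rfl⟩ := exists_nthSmall_eq_of_mem hx
  exact nthSmall_le_nthSmall r.zero_le hr

lemma le_nthSmall_card_sub_one_of_mem (hx : x ∈ S) : x ≤ nthSmall S (#S - 1) := by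
  obtain ⟨r, hr, rfl⟩ := exists_nthSmall_eq_of_mem hx
  exact nthSmall_le_nthSmall (by omega) (by omega)

lemma shiftGE_iff {T : Finset ℕ} :
    shiftGE T S ↔ #T = #S ∧ ∀ r < #S, nthSmall T r ≤ nthSmall S r := by
  simp only [shiftGE, List.forall₂_iff_get, length_sort, List.get_eq_getElem]
  refine and_congr_right fun hc => ⟨fun h r hr => ?_, fun h r hrT hrS => ?_⟩
  · rw [nthSmall_eq_getElem (hc ▸ hr), nthSmall_eq_getElem hr]
    exact h r (hc ▸ hr) hr
  · simpa only [nthSmall_eq_getElem hrT, nthSmall_eq_getElem hrS] using h r hrS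

end SortedElements

def lastEls (S : Finset ℕ) (j : ℕ) : Finset ℕ :=
  ((S.sort (· ≤ ·)).drop j).toFinset

section Splitting

variable {S A B : Finset ℕ} {j r : ℕ}

lemma sort_firstEls : (firstEls S j).sort (· ≤ ·) = (S.sort (· ≤ ·)).take j :=
  (List.toFinset_sort _ ((sort_nodup _ _).sublist (List.take_sublist _ _))).2
    ((pairwise_sort _ _).sublist (List.take_sublist _ _))

lemma sort_lastEls : (lastEls S j).sort (· ≤ ·) = (S.sort (· ≤ ·)).drop j :=
  (List.toFinset_sort _ ((sort_nodup _ _).sublist (List.drop_sublist _ _))).2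
    ((pairwise_sort _ _).sublist (List.drop_sublist _ _))

lemma card_firstEls : #(firstEls S j) = min j #S := by
  rw [← length_sort (· ≤ ·), sort_firstEls, List.length_take, length_sort]

lemma card_lastEls : #(lastEls S j) = #S - j := by
  rw [← length_sort (· ≤ ·), sort_lastEls, List.length_drop, length_sort]

lemma nthSmall_firstEls (h : r < j) : nthSmall (firstEls S j) r = nthSmall S r := by
  simp [nthSmall, sort_firstEls, List.getD_eq_getElem?_getD, h]

lemma nthSmall_lastEls : nthSmall (lastEls S j) r = nthSmall S (j + r) := by
  simp [nthSmall, sort_lastEls, List.getD_eq_getElem?_getD]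

lemma firstEls_subset : firstEls S j ⊆ S := fun _ hx =>
  (mem_sort (· ≤ ·)).1 (List.take_subset _ _ (List.mem_toFinset.1 hx))

lemma lastEls_subset : lastEls S j ⊆ S := fun _ hx =>
  (mem_sort (· ≤ ·)).1 (List.drop_subset _ _ (List.mem_toFinset.1 hx))

lemma firstEls_union_lastEls : firstEls S j ∪ lastEls S j = S := by
  rw [firstEls, lastEls, ← List.toFinset_append, List.take_append_drop, sort_toFinset]

lemma firstEls_zero : firstEls S 0 = ∅ := by
  simp [firstEls]

lemma sort_union_of_forall_lt (hAB : ∀ a ∈ A, ∀ b ∈ B, a < b) :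
    (A ∪ B).sort (· ≤ ·) = A.sort (· ≤ ·) ++ B.sort (· ≤ ·) := by
  have hnd : (A.sort (· ≤ ·) ++ B.sort (· ≤ ·)).Nodup :=
    (sort_nodup _ _).append (sort_nodup _ _)
      fun a ha hb => (hAB a ((mem_sort _).1 ha) a ((mem_sort _).1 hb)).ne rfl
  have hsorted : (A.sort (· ≤ ·) ++ B.sort (· ≤ ·)).Pairwise (· ≤ ·) :=
    List.pairwise_append.2 ⟨pairwise_sort _ _, pairwise_sort _ _,
      fun a ha b hb => (hAB a ((mem_sort _).1 ha) b ((mem_sort _).1 hb)).le⟩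
  simpa only [List.toFinset_append, sort_toFinset] using (List.toFinset_sort _ hnd).2 hsorted

lemma firstEls_union_of_forall_lt (hAB : ∀ a ∈ A, ∀ b ∈ B, a < b) :
    firstEls (A ∪ B) #A = A := by
  rw [firstEls, sort_union_of_forall_lt hAB, List.take_left' (length_sort _), sort_toFinset]

lemma lastEls_union_of_forall_lt (hAB : ∀ a ∈ A, ∀ b ∈ B, a < b) :
    lastEls (A ∪ B) #A = B := by
  rw [lastEls, sort_union_of_forall_lt hAB, List.drop_left' (length_sort _), sort_toFinset]

end Splitting

section ShiftPrefix

variable {S T A B : Finset ℕ} {k ℓ M a : ℕ}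

lemma shiftGE_firstEls_iff (hℓ : ℓ ≤ #S) :
    shiftGE A (firstEls S ℓ) ↔ #A = ℓ ∧ ∀ r < ℓ, nthSmall A r ≤ nthSmall S r := by
  have hc : #(firstEls S ℓ) = ℓ := by rw [card_firstEls]; omega
  rw [shiftGE_iff, hc]
  exact and_congr_right fun _ => forall₂_congr fun r hr => by rw [nthSmall_firstEls hr]

lemma lt_nthSmall_of_shiftGE_firstEls (hℓ : ℓ < #S) (hA : shiftGE A (firstEls S ℓ))
    (ha : a ∈ A) : a < nthSmall S ℓ := by
  obtain ⟨hAc, hAS⟩ := (shiftGE_firstEls_iff hℓ.le).1 hA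
  have hpos : 0 < ℓ := hAc ▸ card_pos.2 ⟨a, ha⟩
  calc a ≤ nthSmall A (ℓ - 1) := hAc ▸ le_nthSmall_card_sub_one_of_mem ha
    _ ≤ nthSmall S (ℓ - 1) := hAS _ (by omega)
    _ < nthSmall S ℓ := nthSmall_lt_nthSmall (by omega) hℓ

lemma forall_lt_of_shiftGE_firstEls (hℓ : ℓ < #S) (hA : shiftGE A (firstEls S ℓ))
    (hB : B ⊆ Ioc (nthSmall S ℓ) M) : ∀ a ∈ A, ∀ b ∈ B, a < b := fun _ ha _ hb =>
  (lt_nthSmall_of_shiftGE_firstEls hℓ hA ha).trans (mem_Ioc.1 (hB hb)).1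

def fitLength (S T : Finset ℕ) (k : ℕ) : ℕ :=
  Nat.findGreatest (fun r => ∀ s < r, nthSmall T s ≤ nthSmall S s) k

lemma fitLength_le : fitLength S T k ≤ k :=
  Nat.findGreatest_le k

lemma fitLength_eq_self_iff : fitLength S T k = k ↔ ∀ s < k, nthSmall T s ≤ nthSmall S s := by
  rw [fitLength, Nat.findGreatest_eq_iff]
  constructor
  · rintro ⟨-, h, -⟩ s hs
    exact h (by omega) s hs
  · exact fun h => ⟨le_rfl, fun _ => h, fun _ h₁ h₂ => absurd h₁ (by omega)⟩

lemma fitLength_eq_iff_of_lt (hℓ : ℓ < k) :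
    fitLength S T k = ℓ ↔
      (∀ s < ℓ, nthSmall T s ≤ nthSmall S s) ∧ nthSmall S ℓ < nthSmall T ℓ := by
  rw [fitLength, Nat.findGreatest_eq_iff]
  constructor
  · rintro ⟨-, hpre, hmax⟩
    have hpre : ∀ s < ℓ, nthSmall T s ≤ nthSmall S s := by
      rcases ℓ.eq_zero_or_pos with rfl | hpos
      exacts [fun s hs => absurd hs s.not_lt_zero, hpre hpos.ne']
    refine ⟨hpre, not_le.1 fun hℓ' => hmax ℓ.lt_succ_self hℓ fun s hs => ?_⟩
    rcases Nat.lt_succ_iff_lt_or_eq.1 hs with hs | rfl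
    exacts [hpre s hs, hℓ']
  · rintro ⟨hpre, hfail⟩
    exact ⟨hℓ.le, fun _ => hpre, fun r hr _ h => absurd (h ℓ hr) (not_le.2 hfail)⟩

lemma shiftGE_firstEls_of_fitLength_eq (hSc : #S = k) (hTc : #T = k) (hℓ : ℓ < k)
    (hfit : fitLength S T k = ℓ) : shiftGE (firstEls T ℓ) (firstEls S ℓ) := by
  rw [shiftGE_firstEls_iff (by omega), card_firstEls]
  refine ⟨by omega, fun r hr => ?_⟩
  rw [nthSmall_firstEls hr]
  exact ((fitLength_eq_iff_of_lt hℓ).1 hfit).1 r hr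

lemma lastEls_subset_Ioc_of_fitLength_eq (hTM : T ⊆ Icc 1 M) (hℓ : ℓ < k)
    (hfit : fitLength S T k = ℓ) : lastEls T ℓ ⊆ Ioc (nthSmall S ℓ) M := by
  intro x hx
  have hfail := ((fitLength_eq_iff_of_lt hℓ).1 hfit).2
  have hxM := (mem_Icc.1 (hTM (lastEls_subset hx))).2
  have hx0 := nthSmall_zero_le_of_mem hx
  rw [nthSmall_lastEls, add_zero] at hx0
  exact mem_Ioc.2 ⟨hfail.trans_le hx0, hxM⟩

lemma fitLength_union_eq (hSc : #S = k) (hℓ : ℓ < k) (hA : shiftGE A (firstEls S ℓ))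
    (hB : B ⊆ Ioc (nthSmall S ℓ) M) (hBne : B.Nonempty) : fitLength S (A ∪ B) k = ℓ := by
  have hAc : #A = ℓ := ((shiftGE_firstEls_iff (by omega)).1 hA).1
  have hAB := forall_lt_of_shiftGE_firstEls (by omega) hA hB
  rw [fitLength_eq_iff_of_lt hℓ]
  constructor
  · intro s hs
    rw [← nthSmall_firstEls hs, ← hAc, firstEls_union_of_forall_lt hAB]
    exact ((shiftGE_firstEls_iff (by omega)).1 hA).2 s (hAc ▸ hs)
  · have hB0 : nthSmall (A ∪ B) ℓ = nthSmall B 0 := by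
      rw [← congrArg (nthSmall · 0) (lastEls_union_of_forall_lt hAB), nthSmall_lastEls, hAc, add_zero]
    rw [hB0]
    exact (mem_Ioc.1 (hB (nthSmall_mem (card_pos.2 hBne)))).1

end ShiftPrefix

section Counting

variable {n k ℓ M : ℕ} {S : Finset ℕ}

lemma Lnum_eq_card_filter (n j : ℕ) (F : Finset ℕ) :
    Lnum n j F = #{T ∈ (Icc 1 n).powersetCard j | shiftGE T F} := by
  rw [Lnum, ← Nat.card_eq_finsetCard]
  exact Nat.card_congr (Equiv.subtypeEquivRight fun T => by
    simp [mem_filter, mem_powersetCard, and_assoc])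

lemma Lnum_zero_empty (n : ℕ) : Lnum n 0 ∅ = 1 := by
  rw [Lnum_eq_card_filter, powersetCard_zero, filter_singleton, if_pos (by simp [shiftGE]),
    card_singleton]

lemma Lnum_eq_card_filter_fitLength_eq_self (hSc : #S = k) (hMn : nthSmall S (k - 1) ≤ n) :
    Lnum n k S = #{T ∈ (Icc 1 (nthSmall S (k - 1))).powersetCard k | fitLength S T k = k} := by
  rw [Lnum_eq_card_filter]
  congr 1
  ext T
  simp only [mem_filter, mem_powersetCard, fitLength_eq_self_iff, shiftGE_iff, hSc]
  constructor
  · rintro ⟨⟨hTn, hTc⟩, -, hle⟩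
    refine ⟨⟨fun x hx => mem_Icc.2 ⟨(mem_Icc.1 (hTn hx)).1, ?_⟩, hTc⟩, hle⟩
    have hk : 0 < k := hTc ▸ card_pos.2 ⟨x, hx⟩
    exact (le_nthSmall_card_sub_one_of_mem hx).trans (hTc ▸ hle _ (by omega))
  · rintro ⟨⟨hTM, hTc⟩, hle⟩
    exact ⟨⟨hTM.trans (Icc_subset_Icc_right hMn), hTc⟩, hTc, hle⟩

lemma card_filter_fitLength_eq_of_lt (hSc : #S = k) (hℓ : ℓ < k) (hmM : nthSmall S ℓ ≤ M)
    (hMn : M ≤ n) :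
    #{T ∈ (Icc 1 M).powersetCard k | fitLength S T k = ℓ} =
      Lnum n ℓ (firstEls S ℓ) * (M - nthSmall S ℓ).choose (k - ℓ) := by
  rw [Lnum_eq_card_filter, ← Nat.card_Ioc, ← card_powersetCard, ← card_product]
  refine card_nbij' (fun T => (firstEls T ℓ, lastEls T ℓ)) (fun p => p.1 ∪ p.2) ?_ ?_ ?_ ?_
  · intro T hT
    simp only [mem_coe, mem_filter, mem_product, mem_powersetCard] at hT ⊢
    obtain ⟨⟨hTM, hTc⟩, hfit⟩ := hT
    refine ⟨⟨⟨firstEls_subset.trans (hTM.trans (Icc_subset_Icc_right hMn)), ?_⟩,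
      shiftGE_firstEls_of_fitLength_eq hSc hTc hℓ hfit⟩,
      lastEls_subset_Ioc_of_fitLength_eq hTM hℓ hfit, ?_⟩
    · rw [card_firstEls]; omega
    · rw [card_lastEls]; omega
  · rintro ⟨A, B⟩ hAB
    simp only [mem_coe, mem_filter, mem_product, mem_powersetCard] at hAB ⊢
    obtain ⟨⟨⟨hAn, hAc⟩, hA⟩, hBM, hBc⟩ := hAB
    have hlt := forall_lt_of_shiftGE_firstEls (by omega) hA hBM
    refine ⟨⟨union_subset (fun a ha => ?_) (fun b hb => ?_), ?_⟩,
      fitLength_union_eq hSc hℓ hA hBM (card_pos.1 (by omega))⟩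
    · exact mem_Icc.2 ⟨(mem_Icc.1 (hAn ha)).1,
        (lt_nthSmall_of_shiftGE_firstEls (by omega) hA ha).le.trans hmM⟩
    · have := mem_Ioc.1 (hBM hb)
      exact mem_Icc.2 ⟨by omega, this.2⟩
    · rw [card_union_of_disjoint (disjoint_left.2 fun a ha hb => (hlt a ha a hb).false), hAc,
        hBc]
      omega
  · intro T _
    exact firstEls_union_lastEls
  · rintro ⟨A, B⟩ hAB
    simp only [mem_coe, mem_filter, mem_product, mem_powersetCard] at hAB
    obtain ⟨⟨⟨-, hAc⟩, hA⟩, hBM, -⟩ := hAB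
    have hlt := forall_lt_of_shiftGE_firstEls (by omega) hA hBM
    rw [← hAc]
    exact Prod.ext (firstEls_union_of_forall_lt hlt) (lastEls_union_of_forall_lt hlt)

end Counting

lemma sum_range_eq_add_sum_Icc {α : Type*} [AddCommMonoid α] {f : ℕ → α} {k : ℕ} (hk : 1 ≤ k)
    (hf : f (k - 1) = 0) : ∑ ℓ ∈ range k, f ℓ = f 0 + ∑ ℓ ∈ Icc 1 (k - 2), f ℓ := by
  obtain ⟨j, rfl | rfl⟩ : ∃ j, k = 1 ∨ k = j + 2 := ⟨k - 2, by omega⟩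
  · simp
  · rw [sum_range_succ, show f (j + 1) = 0 from hf, add_zero, sum_range_succ',
      add_comm, Nat.add_sub_cancel, ← Ico_add_one_right_eq_Icc, sum_Ico_eq_sum_range]
    simp only [Nat.add_sub_cancel, add_comm 1]

theorem stmt_11 (n k : ℕ) (hk : 1 ≤ k) (S : Finset ℕ)
    (hS : S ⊆ Finset.Icc 1 n) (hSc : S.card = k) :
    Lnum n k S =
      (nthSmall S (k - 1)).choose k
        - (nthSmall S (k - 1) - nthSmall S 0).choose k
        - ∑ ℓ ∈ Finset.Icc 1 (k - 2),
            Lnum n ℓ (firstEls S ℓ) * (nthSmall S (k - 1) - nthSmall S ℓ).choose (k - ℓ) := by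
  set M := nthSmall S (k - 1)
  set fibre : ℕ → ℕ := fun ℓ => Lnum n ℓ (firstEls S ℓ) * (M - nthSmall S ℓ).choose (k - ℓ)
  have hMn : M ≤ n := (mem_Icc.1 (hS (nthSmall_mem (by omega)))).2
  have htotal : M.choose k = Lnum n k S + ∑ ℓ ∈ range k, fibre ℓ := by
    rw [← Nat.add_sub_cancel M 1, ← Nat.card_Icc, ← card_powersetCard,
      card_eq_sum_card_fiberwise (f := (fitLength S · k)) (t := range (k + 1))
        fun T _ => mem_range.2 (Nat.lt_succ_of_le fitLength_le),
      sum_range_succ, ← Lnum_eq_card_filter_fitLength_eq_self hSc hMn, add_comm]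
    exact congrArg _ (sum_congr rfl fun ℓ hℓ => card_filter_fitLength_eq_of_lt hSc
      (mem_range.1 hℓ) (nthSmall_le_nthSmall (by simp at hℓ; omega) (by omega)) hMn)
  have hlast : fibre (k - 1) = 0 := by
    simp only [fibre, M, Nat.sub_self, show k - (k - 1) = 1 by omega, Nat.choose_zero_succ,
      mul_zero]
  have hfirst : fibre 0 = (M - nthSmall S 0).choose k := by
    simp only [fibre, firstEls_zero, Lnum_zero_empty, one_mul, Nat.sub_zero]
  rw [sum_range_eq_add_sum_Icc hk hlast, hfirst] at htotal
  rw [htotal, Nat.sub_sub, Nat.add_sub_cancel]
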